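/- Let F : C → D and G : D → C be inverse resolving dualities between resolving subcategories C ⊆ A-mod and D ⊆ B^{op}-mod. Then the bimodule T with T ≅ G(B) as a left A-module and T ≅ F(A) as a right B-module is a Wakamatsu tilting A-B-bimodule, F ≅ Hom_A(−,T)|_C, G ≅ Hom_{B^{op}}(−,T)|_D, and C ⊆ W(_AT), D ⊆ W(T_B). -/

import Mathlib

open CategoryTheory

section Core

variable (A : Type) [Ring A]

/-- A short exact sequence of `A`-modules, given by two composable morphisms. -/
def IsSES {X Y Z : ModuleCat A} (f : X ⟶ Y) (g : Y ⟶ Z) : Prop :=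
  Function.Injective f ∧ Function.Exact f g ∧ Function.Surjective g

/-- The class of finitely generated projective `A`-modules. -/
def projClass : Set (ModuleCat A) :=
  {M | Module.Finite A M ∧ Module.Projective A M}

/-- A resolving subcategory of the category of finitely generated `A`-modules:
it consists of finitely generated modules, contains all finitely generated projective modules,
and is closed under isomorphisms, extensions and kernels of epimorphisms. -/
structure IsResolving (C : Set (ModuleCat A)) : Prop where
  fg : ∀ M ∈ C, Module.Finite A M
  proj_mem : ∀ M : ModuleCat A, Module.Finite A M → Module.Projective A M → M ∈ C
  iso_closed : ∀ M N : ModuleCat A, Nonempty (M ≅ N) → M ∈ C → N ∈ C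
  ext_closed : ∀ (X Y Z : ModuleCat A) (f : X ⟶ Y) (g : Y ⟶ Z),
      IsSES A f g → X ∈ C → Z ∈ C → Y ∈ C
  ker_closed : ∀ (X Y Z : ModuleCat A) (f : X ⟶ Y) (g : Y ⟶ Z),
      IsSES A f g → Y ∈ C → Z ∈ C → X ∈ C

/-- A `C`-resolution `⋯ → X 1 → X 0 → M → 0` of `M`:
an exact sequence with all terms in `C`. -/
structure Resolution (C : Set (ModuleCat A)) (M : ModuleCat A) where
  X : ℕ → ModuleCat A
  mem : ∀ i, X i ∈ C
  d : ∀ i, X (i + 1) ⟶ X i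
  ε : X 0 ⟶ M
  surj : Function.Surjective ε
  exact_zero : Function.Exact (d 0) ε
  exact_succ : ∀ i, Function.Exact (d (i + 1)) (d i)

/-- The `n`-th syzygy of `M` with respect to a given resolution:
`syzygy 0 = M` and `syzygy (n+1) = Im (d n) = Ker (X n → X (n-1))`. -/
def Resolution.syzygy {C : Set (ModuleCat A)} {M : ModuleCat A}
    (r : Resolution A C M) : ℕ → ModuleCat A
  | 0 => M
  | n + 1 => ModuleCat.of A (LinearMap.range (r.d n).hom)

/-- `M` has `C`-resolution dimension at most `n`: there is a `C`-resolution of `M`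
which vanishes in degrees `> n`. -/
def resDimLE (C : Set (ModuleCat A)) (M : ModuleCat A) (n : ℕ) : Prop :=
  ∃ r : Resolution A C M, ∀ i, n < i → Limits.IsZero (r.X i)

/-- `Ext_A^j(M, N) = 0` for all `j ≥ k` (with `k ≥ 1`), expressed via the vanishing of the
cohomology of `Hom(P_•, N)` for every projective resolution `P_•` of `M`. -/
def extVanishFrom (M N : ModuleCat A) (k : ℕ) : Prop :=
  ∀ r : Resolution A (projClass A) M, ∀ i : ℕ, k ≤ i + 1 →
    Function.Exact (fun g : r.X i ⟶ N => r.d i ≫ g)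
      (fun g : r.X (i + 1) ⟶ N => r.d (i + 1) ≫ g)

/-- `Ext_A^j(M, N) = 0` for all `j ≥ 1`. -/
def extVanish (M N : ModuleCat A) : Prop := extVanishFrom A M N 1

/-- `Ext_A^1(M, N) = 0`. -/
def ext1Vanish (M N : ModuleCat A) : Prop :=
  ∀ r : Resolution A (projClass A) M,
    Function.Exact (fun g : r.X 0 ⟶ N => r.d 0 ≫ g)
      (fun g : r.X 1 ⟶ N => r.d 1 ≫ g)

/-- `add T`: direct summands of finite direct sums of copies of `T`. -/
def addClass (T : ModuleCat A) : Set (ModuleCat A) :=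
  {M | ∃ (n : ℕ) (s : M ⟶ ModuleCat.of A (Fin n → T))
        (p : ModuleCat.of A (Fin n → T) ⟶ M), s ≫ p = 𝟙 M}

/-- A `D`-coresolution `0 → M → X 0 → X 1 → ⋯` of `M`. -/
structure Coresolution (D : Set (ModuleCat A)) (M : ModuleCat A) where
  X : ℕ → ModuleCat A
  mem : ∀ i, X i ∈ D
  η : M ⟶ X 0
  d : ∀ i, X i ⟶ X (i + 1)
  inj : Function.Injective η
  exact_zero : Function.Exact η (d 0)
  exact_succ : ∀ i, Function.Exact (d i) (d (i + 1))

/-- The coresolution stays exact after applying `Hom_A(-, T)`. -/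
def Coresolution.HomExact {D : Set (ModuleCat A)} {M : ModuleCat A}
    (c : Coresolution A D M) (T : ModuleCat A) : Prop :=
  Function.Surjective (fun g : c.X 0 ⟶ T => c.η ≫ g) ∧
  Function.Exact (fun g : c.X 1 ⟶ T => c.d 0 ≫ g) (fun g : c.X 0 ⟶ T => c.η ≫ g) ∧
  ∀ i, Function.Exact (fun g : c.X (i + 1 + 1) ⟶ T => c.d (i + 1) ≫ g)
        (fun g : c.X (i + 1) ⟶ T => c.d i ≫ g)

/-- `cogen*(T)`: modules admitting an `add T`-coresolution which stays exact
under `Hom_A(-, T)`. -/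
def cogenStar (T : ModuleCat A) : Set (ModuleCat A) :=
  {M | ∃ c : Coresolution A (addClass A T) M, c.HomExact A T}

/-- `W(T) = ^⊥T ∩ cogen*(T)`. -/
def WClass (T : ModuleCat A) : Set (ModuleCat A) :=
  {M | extVanish A M T ∧ M ∈ cogenStar A T}

/-- `T` is a Wakamatsu tilting `A`-module. -/
def IsWakamatsuTilting (T : ModuleCat A) : Prop :=
  Module.Finite A T ∧ (ModuleCat.of A A) ∈ WClass A T ∧ T ∈ WClass A T

/-- A complete projective resolution (totally acyclic complex of finitely generated
projective modules). -/
structure TotallyAcyclic where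
  P : ℤ → ModuleCat A
  fg : ∀ i, Module.Finite A (P i)
  proj : ∀ i, Module.Projective A (P i)
  d : ∀ i, P i ⟶ P (i + 1)
  exact : ∀ i, Function.Exact (d i) (d (i + 1))
  homExact : ∀ i, Function.Exact
      (fun g : P (i + 1 + 1) ⟶ ModuleCat.of A A => d (i + 1) ≫ g)
      (fun g : P (i + 1) ⟶ ModuleCat.of A A => d i ≫ g)

/-- `M` is Gorenstein-projective: `M` is an image in a totally acyclic complex of
projectives. -/
def GorensteinProj (M : ModuleCat A) : Prop :=
  ∃ (c : TotallyAcyclic A) (i : ℤ),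
    Nonempty (M ≅ ModuleCat.of A (LinearMap.range (c.d i).hom))

/-- The class of finitely generated Gorenstein-projective modules. -/
def GPclass : Set (ModuleCat A) := {M | GorensteinProj A M}

/-- Gorenstein-projective dimension at most `n`. -/
def GPdimLE (M : ModuleCat A) (n : ℕ) : Prop := resDimLE A (GPclass A) M n

/-- The class of semi-Gorenstein-projective modules: finitely generated `M` with
`Ext^i(M, A) = 0` for all `i ≥ 1`. -/
def SGPclass : Set (ModuleCat A) :=
  {M | Module.Finite A M ∧ extVanish A M (ModuleCat.of A A)}

/-- `T` is a tilting module of projective dimension at most `ℓ`. -/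
def IsTiltingOfDim (T : ModuleCat A) (ℓ : ℕ) : Prop :=
  Module.Finite A T ∧ resDimLE A (projClass A) T ℓ ∧ extVanish A T T ∧
  ∃ c : Coresolution A (addClass A T) (ModuleCat.of A A),
    ∀ i, ℓ < i → Limits.IsZero (c.X i)

end Core

section Duality

open Opposite

variable (A : Type) [Ring A]

/-- The full subcategory of `ModuleCat A` on a class of modules. -/
abbrev ResSub (C : Set (ModuleCat A)) := ObjectProperty.FullSubcategory (fun M : ModuleCat A => M ∈ C)

variable {A} {B : Type} [Ring B]

/-- A contravariant functor between fully exact subcategories is exact if it sends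
(induced) short exact sequences to short exact sequences. -/
def PreservesSESContra {C : Set (ModuleCat A)} {D : Set (ModuleCat B)}
    (F : (ResSub A C)ᵒᵖ ⥤ ResSub B D) : Prop :=
  ∀ (X Y Z : ResSub A C) (f : X ⟶ Y) (g : Y ⟶ Z),
    IsSES A ((ObjectProperty.ι _).map f) ((ObjectProperty.ι _).map g) →
    IsSES B ((ObjectProperty.ι _).map (F.map g.op))
      ((ObjectProperty.ι _).map (F.map f.op))

/-- Inverse resolving dualities between `C ⊆ A`-mod and `D ⊆ B`-mod:
`C`, `D` are resolving subcategories, `F`, `G` are contravariant additive functors which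
are exact for the induced exact structures, and `G ∘ F ≅ Id`, `F ∘ G ≅ Id`. -/
structure ResolvingDuality (C : Set (ModuleCat A)) (D : Set (ModuleCat B)) where
  resC : IsResolving A C
  resD : IsResolving B D
  F : (ResSub A C)ᵒᵖ ⥤ ResSub B D
  G : (ResSub B D)ᵒᵖ ⥤ ResSub A C
  Fadd : F.Additive
  Gadd : G.Additive
  Fexact : PreservesSESContra F
  Gexact : PreservesSESContra G
  GF : Nonempty (F.rightOp ⋙ G ≅ 𝟭 (ResSub A C))
  FG : Nonempty (G.rightOp ⋙ F ≅ 𝟭 (ResSub B D))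

/-- The regular module, as an object of a resolving subcategory. -/
def regularObj {C : Set (ModuleCat A)} (h : IsResolving A C) : ResSub A C :=
  ⟨ModuleCat.of A A, h.proj_mem _ (Module.Finite.self A) (inferInstance : Module.Projective A A)⟩

end Duality

section Bimodule

open Opposite

/-- An `A`-`B₂`-bimodule (where `B₂` plays the role of `B^{op}`, so that right `B`-modules
are left `B₂`-modules). -/
structure BimoduleOver (A B₂ : Type) [Ring A] [Ring B₂] where
  T : Type
  [acg : AddCommGroup T]
  [modA : Module A T]
  [modB : Module B₂ T]
  [comm : SMulCommClass A B₂ T]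
  [comm' : SMulCommClass B₂ A T]

attribute [instance] BimoduleOver.acg BimoduleOver.modA BimoduleOver.modB
  BimoduleOver.comm BimoduleOver.comm'

variable {A B₂ : Type} [Ring A] [Ring B₂]

/-- The underlying left `A`-module of a bimodule. -/
def BimoduleOver.left (W : BimoduleOver A B₂) : ModuleCat A := ModuleCat.of A W.T

/-- The underlying left `B₂`-module (i.e. right `B`-module) of a bimodule. -/
def BimoduleOver.right (W : BimoduleOver A B₂) : ModuleCat B₂ := ModuleCat.of B₂ W.T

/-- The canonical map `A → End_{B₂}(T)` given by the left action. -/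
def BimoduleOver.leftAction (W : BimoduleOver A B₂) (a : A) : W.T →ₗ[B₂] W.T where
  toFun t := a • t
  map_add' := smul_add a
  map_smul' b t := smul_comm a b t

/-- The canonical map `B₂ → End_A(T)` given by the `B₂`-action. -/
def BimoduleOver.rightAction (W : BimoduleOver A B₂) (b : B₂) : W.T →ₗ[A] W.T where
  toFun t := b • t
  map_add' := smul_add b
  map_smul' a t := smul_comm b a t

/-- The bimodule is faithfully balanced: the two canonical maps
`A → End_{B₂}(T)` and `B₂ → End_A(T)` are bijective. -/
def BimoduleOver.IsFaithfullyBalanced (W : BimoduleOver A B₂) : Prop :=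
  Function.Bijective W.leftAction ∧ Function.Bijective W.rightAction

/-- A Wakamatsu tilting bimodule: faithfully balanced and Wakamatsu tilting on both
sides. -/
def BimoduleOver.IsWakamatsuTiltingBimodule (W : BimoduleOver A B₂) : Prop :=
  W.IsFaithfullyBalanced ∧ IsWakamatsuTilting A W.left ∧ IsWakamatsuTilting B₂ W.right

/-- A tilting bimodule (of projective dimension at most `ℓ`). -/
def BimoduleOver.IsTiltingBimodule (W : BimoduleOver A B₂) (ℓ : ℕ) : Prop :=
  W.IsFaithfullyBalanced ∧ IsTiltingOfDim A W.left ℓ ∧ IsTiltingOfDim B₂ W.right ℓ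

/-- The contravariant Hom-functor `Hom_A(-, T) : (A-mod)ᵒᵖ → B₂-mod` attached to a
bimodule `T`. -/
def BimoduleOver.homFunctor (W : BimoduleOver A B₂) :
    (ModuleCat A)ᵒᵖ ⥤ ModuleCat B₂ where
  obj M := ModuleCat.of B₂ (M.unop →ₗ[A] W.T)
  map {M N} f := ModuleCat.ofHom
    { toFun := fun g => g.comp f.unop.hom
      map_add' := fun g h => LinearMap.add_comp _ _ _
      map_smul' := fun b g => rfl }
  map_id := by intros; rfl
  map_comp := by intros; rfl

/-- The opposite bimodule, exchanging the two actions. -/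
def BimoduleOver.flip (W : BimoduleOver A B₂) : BimoduleOver B₂ A where
  T := W.T

/-- `Hom_A(M, T)` as a left `B₂`-module, for `M` an `A`-module. -/
def BimoduleOver.homObj (W : BimoduleOver A B₂) (M : ModuleCat A) : ModuleCat B₂ :=
  ModuleCat.of B₂ (M →ₗ[A] W.T)

/-- The evaluation (double dual) map `M → Hom_{B₂}(Hom_A(M,T), T)`. -/
def BimoduleOver.eval (W : BimoduleOver A B₂) (M : ModuleCat A) (m : M) :
    (M →ₗ[A] W.T) →ₗ[B₂] W.T where
  toFun f := f m
  map_add' f g := rfl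
  map_smul' b f := rfl

end Bimodule


/-!
Put `T := G(B)`. Since `F` and `G` form an equivalence `C ≌ Dᵒᵖ`, for `X ∈ C` we get
`Hom_A(X, T) ≅ Hom_{Bᵒᵖ}(B, F X) ≅ F X`, naturally in `X` and compatibly with the right
`B`-action on `T` induced by `G` from right multiplications on `B`; this is
`F ≅ Hom_A(-, T)`.
Exactness of `F` then says that maps into `T` extend along inflations of `C`, which gives
`Ext^{≥1}_A(C, T) = 0` by dimension shifting along syzygies (they stay in `C`). Applying `G`
to `0 → K → B^n → F M → 0` embeds every `M ∈ C` into `G(B^n) ∈ add T` with cokernel in `C`,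
and splicing these gives `C ⊆ cogen*(T)`. Full faithfulness of `G` gives `B ≅ End_A(T)`, and
the same argument for the inverse duality identifies `T` with `F(A)` as a bimodule, which
gives `A ≅ End_{Bᵒᵖ}(T)` and the statements on the `B`-side.
-/

open CategoryTheory Opposite Function

section HomExactness

variable {R : Type} [Ring R] {A B C D T : ModuleCat R} {ι : A ⟶ B} {π : B ⟶ C}

lemma Function.Exact.comp_surjective_injective {α β γ δ ε : Type*} [Zero γ] [Zero ε]
    {f : α → β} {g : β → γ} (h : Exact f g) {p : δ → α} (hp : Surjective p)
    {i : γ → ε} (hi : Injective i) (hi0 : i 0 = 0) : Exact (f ∘ p) (i ∘ g) :=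
  fun y => ((h.comp_injective _ hi hi0) y).trans (by rw [hp.range_comp])

lemma IsSES.comp_eq_zero (h : IsSES R ι π) : ι ≫ π = 0 :=
  ModuleCat.hom_ext (LinearMap.ext h.2.1.apply_apply_eq_zero)

lemma IsSES.iso_comp {A' : ModuleCat R} (h : IsSES R ι π) (e : A' ≅ A) :
    IsSES R (e.hom ≫ ι) π :=
  have he : Surjective e.hom := e.toLinearEquiv.surjective
  ⟨h.1.comp e.toLinearEquiv.injective,
    fun y => (h.2.1 y).trans (by rw [ConcreteCategory.coe_comp, he.range_comp]), h.2.2⟩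

lemma IsSES.exists_comp_eq (h : IsSES R ι π) {g : B ⟶ T} (hg : ι ≫ g = 0) :
    ∃ k : C ⟶ T, π ≫ k = g := by
  have hle : LinearMap.range ι.hom ≤ LinearMap.ker g.hom := by
    rintro _ ⟨x, rfl⟩
    exact congr($hg x)
  refine ⟨ModuleCat.ofHom ((LinearMap.range ι.hom).liftQ g.hom hle ∘ₗ
    (h.2.1.linearEquivOfSurjective (f := ι.hom) (g := π.hom) h.2.2).symm.toLinearMap), ?_⟩
  ext x
  simp

lemma IsSES.exact_precomp (h : IsSES R ι π) {j : C ⟶ D}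
    (hj : Surjective fun k : D ⟶ T => j ≫ k) {A' : ModuleCat R} {p : A' ⟶ A}
    (hp : Surjective p) :
    Exact (fun g : D ⟶ T => (π ≫ j) ≫ g) (fun g : B ⟶ T => (p ≫ ι) ≫ g) := by
  have : Epi p := (ModuleCat.epi_iff_surjective p).2 hp
  intro g
  constructor
  · intro hg
    obtain ⟨k, rfl⟩ := h.exists_comp_eq (g := g)
      (by rw [← cancel_epi p, Limits.comp_zero, ← Category.assoc]; exact hg)
    obtain ⟨k', rfl⟩ := hj k
    exact ⟨k', Category.assoc _ _ _⟩
  · rintro ⟨k, rfl⟩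
    simp [reassoc_of% h.comp_eq_zero]

end HomExactness

namespace Resolution

variable {R : Type} [Ring R] {𝒞 : Set (ModuleCat R)} {M : ModuleCat R} (r : Resolution R 𝒞 M)

noncomputable def toSyzygy : ∀ i, r.X i ⟶ r.syzygy R i
  | 0 => r.ε
  | i + 1 => ModuleCat.ofHom (r.d i).hom.rangeRestrict

def syzygyι (i : ℕ) : r.syzygy R (i + 1) ⟶ r.X i :=
  ModuleCat.ofHom (LinearMap.range (r.d i).hom).subtype

lemma toSyzygy_comp_syzygyι (i : ℕ) : r.toSyzygy (i + 1) ≫ r.syzygyι i = r.d i := rfl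

lemma toSyzygy_surjective : ∀ i, Surjective (r.toSyzygy i)
  | 0 => r.surj
  | i + 1 => (r.d i).hom.surjective_rangeRestrict

lemma isSES_syzygy (i : ℕ) : IsSES R (r.syzygyι i) (r.toSyzygy i) := by
  refine ⟨Subtype.val_injective, ?_, r.toSyzygy_surjective i⟩
  change Exact (LinearMap.range (r.d i).hom).subtype (r.toSyzygy i).hom
  rw [LinearMap.exact_iff, Submodule.range_subtype]
  cases i with
  | zero => exact LinearMap.exact_iff.mp r.exact_zero
  | succ i => exact (LinearMap.ker_rangeRestrict _).trans (LinearMap.exact_iff.mp (r.exact_succ i))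

lemma syzygy_mem {C : Set (ModuleCat R)} (hC : IsResolving R C) (hX : ∀ i, r.X i ∈ C)
    (hM : M ∈ C) : ∀ i, r.syzygy R i ∈ C
  | 0 => hM
  | i + 1 => hC.ker_closed _ _ _ _ _ (r.isSES_syzygy i) (hX i) (syzygy_mem hC hX hM i)

end Resolution

section AddClass

variable {R : Type} [Ring R] {T M : ModuleCat R}

lemma addClass_of_iso {T' : ModuleCat R} (e : T ≅ T') (hM : M ∈ addClass R T) :
    M ∈ addClass R T' := by
  obtain ⟨n, s, p, hsp⟩ := hM
  let E := (LinearEquiv.piCongrRight fun _ : Fin n => e.toLinearEquiv).toModuleIso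
  exact ⟨n, s ≫ E.hom, E.inv ≫ p, by simpa using hsp⟩

lemma mem_addClass_of_sum_comp_eq_id {n : ℕ} (s : Fin n → (M ⟶ T)) (p : Fin n → (T ⟶ M))
    (h : ∑ k, s k ≫ p k = 𝟙 M) : M ∈ addClass R T :=
  ⟨n, ModuleCat.ofHom (LinearMap.pi fun k => (s k).hom),
    ModuleCat.ofHom (∑ k, (p k).hom ∘ₗ LinearMap.proj k), by
      ext x
      simpa using congr($h x)⟩

end AddClass

section RelInjCogenerator

variable {R : Type} [Ring R] {C : Set (ModuleCat R)} {T M : ModuleCat R}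

/-- `extend` is `Ext¹(C, T) = 0` on short exact sequences inside `C`, phrased without `Ext`. -/
structure IsRelInjCogenerator (C : Set (ModuleCat R)) (T : ModuleCat R) : Prop where
  extend : ∀ ⦃X Y Z : ModuleCat R⦄ (f : X ⟶ Y) (g : Y ⟶ Z), IsSES R f g →
    X ∈ C → Y ∈ C → Z ∈ C → Surjective fun k : Y ⟶ T => f ≫ k
  embed : ∀ M ∈ C, ∃ (P M' : ModuleCat R) (f : M ⟶ P) (g : P ⟶ M'),
    IsSES R f g ∧ P ∈ C ∧ M' ∈ C ∧ P ∈ addClass R T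

namespace IsRelInjCogenerator

lemma of_iso (hT : IsRelInjCogenerator C T) {T' : ModuleCat R} (e : T ≅ T') :
    IsRelInjCogenerator C T' where
  extend _ _ _ f g hfg hX hY hZ k := by
    obtain ⟨h, hh⟩ := hT.extend f g hfg hX hY hZ (k ≫ e.inv)
    exact ⟨h ≫ e.hom, by simp [reassoc_of% hh]⟩
  embed M hM := by
    obtain ⟨P, M', f, g, hfg, hP, hM', hadd⟩ := hT.embed M hM
    exact ⟨P, M', f, g, hfg, hP, hM', addClass_of_iso e hadd⟩

lemma extVanish (hT : IsRelInjCogenerator C T) (hC : IsResolving R C) (hM : M ∈ C) :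
    extVanish R M T := by
  intro r i _
  have hX : ∀ i, r.X i ∈ C := fun i => hC.proj_mem _ (r.mem i).1 (r.mem i).2
  have hΩ := r.syzygy_mem hC hX hM
  simpa only [Resolution.toSyzygy_comp_syzygyι] using (r.isSES_syzygy (i + 1)).exact_precomp
    (hT.extend _ _ (r.isSES_syzygy i) (hΩ (i + 1)) (hX i) (hΩ i)) (r.toSyzygy_surjective (i + 2))

lemma mem_cogenStar (hT : IsRelInjCogenerator C T) (hM : M ∈ C) : M ∈ cogenStar R T := by
  choose P M' f g hses hP hM' hadd using hT.embed
  -- `K n` is the `n`-th cosyzygy; the coresolution splices `K n ↪ P (K n) ↠ K (n + 1)`.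
  let K : ℕ → C := fun n => Nat.rec ⟨M, hM⟩ (fun _ N => ⟨M' N.1 N.2, hM' N.1 N.2⟩) n
  have hext : ∀ n, Surjective fun k : P (K n).1 (K n).2 ⟶ T => f _ _ ≫ k := fun n =>
    hT.extend _ _ (hses _ _) (K n).2 (hP _ _) (hM' _ _)
  refine ⟨{ X := fun n => P (K n).1 (K n).2
            mem := fun n => hadd _ _
            η := f M hM
            d := fun n => g (K n).1 (K n).2 ≫ f (K (n + 1)).1 (K (n + 1)).2
            inj := (hses M hM).1
            exact_zero := ?_
            exact_succ := fun n => ?_ }, hext 0, ?_, fun n => ?_⟩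
  · rw [ConcreteCategory.coe_comp]
    exact (hses M hM).2.1.comp_injective _ (hses _ _).1 (map_zero _)
  · rw [ConcreteCategory.coe_comp, ConcreteCategory.coe_comp]
    exact (hses _ _).2.1.comp_surjective_injective (hses _ _).2.2 (hses _ _).1 (map_zero _)
  · have := (hses M hM).exact_precomp (hext 1) (p := 𝟙 _) surjective_id
    rw [Category.id_comp] at this
    exact this
  · exact (hses _ _).exact_precomp (hext (n + 2)) (hses _ _).2.2

lemma mem_WClass (hT : IsRelInjCogenerator C T) (hC : IsResolving R C) (hM : M ∈ C) :
    M ∈ WClass R T :=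
  ⟨hT.extVanish hC hM, hT.mem_cogenStar hM⟩

lemma isWakamatsuTilting (hT : IsRelInjCogenerator C T) (hC : IsResolving R C) (hTC : T ∈ C) :
    IsWakamatsuTilting R T :=
  ⟨hC.fg T hTC, hT.mem_WClass hC (hC.proj_mem _ (Module.Finite.self R) inferInstance),
    hT.mem_WClass hC hTC⟩

end IsRelInjCogenerator

end RelInjCogenerator

section RegularObj

variable {R : Type} [Ring R] {C : Set (ModuleCat R)}

lemma ResSub.sum_hom {X Y : ResSub R C} {ι : Type*} (f : ι → (X ⟶ Y)) (s : Finset ι) :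
    (∑ i ∈ s, f i).hom = ∑ i ∈ s, (f i).hom :=
  (ObjectProperty.ι _).map_sum f s

variable (hC : IsResolving R C)

def regularHomEquiv (X : ResSub R C) : (regularObj hC ⟶ X) ≃ X.obj where
  toFun f := f.hom (1 : R)
  invFun x := ObjectProperty.homMk (ModuleCat.ofHom (LinearMap.toSpanSingleton R X.obj x))
  left_inv f := by
    ext
    exact one_smul R (f.hom (1 : R))
  right_inv x := one_smul R x

def rightMul (a : R) : regularObj hC ⟶ regularObj hC := (regularHomEquiv hC _).symm a

lemma rightMul_bijective : Bijective (rightMul hC) :=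
  (regularHomEquiv hC (regularObj hC)).symm.bijective

lemma rightMul_one : rightMul hC 1 = 𝟙 _ := by
  ext
  exact one_mul (1 : R)

lemma rightMul_mul (a b : R) : rightMul hC (a * b) = rightMul hC a ≫ rightMul hC b := by
  ext
  exact (mul_assoc 1 a b).symm

lemma rightMul_add (a b : R) : rightMul hC (a + b) = rightMul hC a + rightMul hC b := by
  ext
  exact mul_add 1 a b

lemma rightMul_zero : rightMul hC 0 = 0 := by
  ext
  exact mul_zero (1 : R)

lemma regularHomEquiv_rightMul_comp {X : ResSub R C} (a : R) (f : regularObj hC ⟶ X) :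
    regularHomEquiv hC X (rightMul hC a ≫ f) = a • regularHomEquiv hC X f := by
  change f.hom.hom ((1 : R) * a) = a • f.hom.hom (1 : R)
  exact (congrArg f.hom.hom (by simp : (1 : R) * a = a • (1 : R))).trans (map_smul _ a _)

def freeObj (n : ℕ) : ResSub R C :=
  ⟨ModuleCat.of R (Fin n → R), hC.proj_mem _ inferInstance inferInstance⟩

def freeObj.single {n : ℕ} (k : Fin n) : regularObj hC ⟶ freeObj hC n :=
  ObjectProperty.homMk (ModuleCat.ofHom (LinearMap.single R (fun _ => R) k))

def freeObj.proj {n : ℕ} (k : Fin n) : freeObj hC n ⟶ regularObj hC :=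
  ObjectProperty.homMk (ModuleCat.ofHom (LinearMap.proj k))

lemma freeObj.sum_proj_comp_single (n : ℕ) :
    ∑ k, freeObj.proj hC k ≫ freeObj.single hC k = 𝟙 (freeObj hC n) := by
  ext x
  rw [ResSub.sum_hom, ModuleCat.hom_sum, LinearMap.sum_apply]
  exact Finset.univ_sum_single (M := fun _ : Fin n => R) x

end RegularObj

noncomputable def BimoduleOver.homFunctorIso {A B₂ : Type} [Ring A] [Ring B₂]
    {W W' : BimoduleOver A B₂} (e : W.T ≃ₗ[A] W'.T)
    (he : ∀ (b : B₂) (t : W.T), e (b • t) = b • e t) : W.homFunctor ≅ W'.homFunctor :=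
  NatIso.ofComponents (fun _ => LinearEquiv.toModuleIso
    { toFun := fun g => e.toLinearMap ∘ₗ g
      invFun := fun g => e.symm.toLinearMap ∘ₗ g
      map_add' := fun _ _ => LinearMap.comp_add _ _ _
      map_smul' := fun b g => LinearMap.ext fun x => he b (g x)
      left_inv := fun _ => LinearMap.ext fun _ => e.symm_apply_apply _
      right_inv := fun _ => LinearMap.ext fun _ => e.apply_symm_apply _ })
    fun _ => rfl

namespace ResolvingDuality

attribute [local instance] ResolvingDuality.Fadd ResolvingDuality.Gadd

variable {R S : Type} [Ring R] [Ring S] {C : Set (ModuleCat R)} {D : Set (ModuleCat S)}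
  (d : ResolvingDuality C D)

def flip : ResolvingDuality D C where
  resC := d.resD
  resD := d.resC
  F := d.G
  G := d.F
  Fadd := d.Gadd
  Gadd := d.Fadd
  Fexact := d.Gexact
  Gexact := d.Fexact
  GF := d.FG
  FG := d.GF

noncomputable def equivalence : ResSub R C ≌ (ResSub S D)ᵒᵖ :=
  CategoryTheory.Equivalence.mk d.F.rightOp d.G d.GF.some.symm
    (NatIso.ofComponents (fun X => (d.FG.some.app X.unop).op.symm) fun f => by
      apply Quiver.Hom.unop_inj
      simpa using (d.FG.some.inv.naturality f.unop).symm)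

abbrev dualizingObj : ResSub R C := d.G.obj (op (regularObj d.resD))

/-- `Hom(X, G S) ≃ Hom(S, F X) ≃ F X`: the adjunction of `d.equivalence`, then evaluation
at `1`. -/
noncomputable def homEquiv (X : ResSub R C) : (X ⟶ d.dualizingObj) ≃ (d.F.obj (op X)).obj :=
  ((d.equivalence.toAdjunction.homEquiv X _).symm.trans (opEquiv _ _)).trans
    (regularHomEquiv d.resD _)

lemma homEquiv_comp {X Y : ResSub R C} (f : X ⟶ Y) (g : Y ⟶ d.dualizingObj) :
    d.homEquiv X (f ≫ g) = (d.F.map f.op).hom (d.homEquiv Y g) :=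
  congrArg (fun φ => φ.unop.hom (1 : S))
    (d.equivalence.toAdjunction.homEquiv_naturality_left_symm f g)

lemma homEquiv_comp_rightMul {X : ResSub R C} (b : S) (g : X ⟶ d.dualizingObj) :
    d.homEquiv X (g ≫ d.G.map (rightMul d.resD b).op) = b • d.homEquiv X g :=
  (congrArg (fun φ => φ.unop.hom (1 : S))
    (d.equivalence.toAdjunction.homEquiv_naturality_right_symm g (rightMul d.resD b).op)).trans
    (regularHomEquiv_rightMul_comp d.resD b ((d.equivalence.toAdjunction.homEquiv X _).symm g).unop)

lemma homEquiv_eq_map {X : ResSub R C} (g : X ⟶ d.dualizingObj) :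
    d.homEquiv X g = (d.F.map g.op).hom (d.homEquiv _ (𝟙 _)) := by
  simpa using d.homEquiv_comp g (𝟙 _)

lemma homEquiv_add {X : ResSub R C} (g g' : X ⟶ d.dualizingObj) :
    d.homEquiv X (g + g') = d.homEquiv X g + d.homEquiv X g' := by
  rw [homEquiv_eq_map d (g + g'), homEquiv_eq_map d g, homEquiv_eq_map d g', op_add,
    Functor.map_add]
  rfl

lemma G_obj_freeObj_mem_addClass (n : ℕ) :
    (d.G.obj (op (freeObj d.resD n))).obj ∈ addClass R d.dualizingObj.obj := by
  refine mem_addClass_of_sum_comp_eq_id (fun k => (d.G.map (freeObj.single d.resD k).op).hom)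
    (fun k => (d.G.map (freeObj.proj d.resD k).op).hom) ?_
  have h := congrArg (fun φ => (d.G.map φ.op).hom) (freeObj.sum_proj_comp_single d.resD n)
  rw [op_sum, Functor.map_sum, op_id, CategoryTheory.Functor.map_id, ResSub.sum_hom] at h
  simpa only [op_comp, CategoryTheory.Functor.map_comp, ObjectProperty.FullSubcategory.comp_hom,
    ObjectProperty.FullSubcategory.id_hom] using h

lemma isRelInjCogenerator : IsRelInjCogenerator C d.dualizingObj.obj where
  extend X Y Z f g h hX hY hZ k := by
    obtain ⟨y, hy⟩ := (d.Fexact ⟨X, hX⟩ ⟨Y, hY⟩ ⟨Z, hZ⟩ (ObjectProperty.homMk f)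
      (ObjectProperty.homMk g) h).2.2 (d.homEquiv _ (ObjectProperty.homMk k))
    have : ObjectProperty.homMk f ≫ (d.homEquiv ⟨Y, hY⟩).symm y = ObjectProperty.homMk k :=
      (d.homEquiv _).injective (by rw [homEquiv_comp, Equiv.apply_symm_apply]; exact hy)
    exact ⟨_, congrArg InducedCategory.Hom.hom this⟩
  embed M hM := by
    let X : ResSub R C := ⟨M, hM⟩
    have := d.resD.fg _ (d.F.obj (op X)).2
    obtain ⟨n, π, hπ⟩ := Module.Finite.exists_fin' S (d.F.obj (op X)).obj
    have hses : IsSES S (ModuleCat.ofHom (LinearMap.ker π).subtype) (ModuleCat.ofHom π) :=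
      ⟨Subtype.val_injective, LinearMap.exact_subtype_ker_map π, hπ⟩
    let K : ResSub S D :=
      ⟨_, d.resD.ker_closed _ _ _ _ _ hses (freeObj d.resD n).2 (d.F.obj (op X)).2⟩
    have hG := d.Gexact K (freeObj d.resD n) (d.F.obj (op X))
      (ObjectProperty.homMk (ModuleCat.ofHom (LinearMap.ker π).subtype))
      (ObjectProperty.homMk (ModuleCat.ofHom π)) hses
    exact ⟨_, _, _, _, hG.iso_comp ((ObjectProperty.ι _).mapIso (d.GF.some.app X).symm),
      (d.G.obj _).2, (d.G.obj _).2, d.G_obj_freeObj_mem_addClass n⟩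

noncomputable def actionHom : S →+* Module.End R d.dualizingObj.obj where
  toFun b := (d.G.map (rightMul d.resD b).op).hom.hom
  map_one' := by rw [rightMul_one, op_id, CategoryTheory.Functor.map_id]; rfl
  map_mul' b c := by rw [rightMul_mul, op_comp, CategoryTheory.Functor.map_comp]; rfl
  map_zero' := by rw [rightMul_zero, Limits.op_zero, Functor.map_zero]; rfl
  map_add' b c := by rw [rightMul_add, op_add, Functor.map_add]; rfl

noncomputable def bimodule : BimoduleOver R S :=
  letI := Module.compHom d.dualizingObj.obj d.actionHom
  { T := d.dualizingObj.obj
    comm := ⟨fun a b t => ((d.actionHom b).map_smul a t).symm⟩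
    comm' := ⟨fun b a t => (d.actionHom b).map_smul a t⟩ }

noncomputable def homLinearEquiv (X : ResSub R C) :
    (X.obj →ₗ[R] d.bimodule.T) ≃ₗ[S] (d.F.obj (op X)).obj where
  toFun l := d.homEquiv X (ObjectProperty.homMk (ModuleCat.ofHom l))
  invFun y := ((d.homEquiv X).symm y).hom.hom
  map_add' l l' := by
    rw [← homEquiv_add]
    rfl
  map_smul' b l := by
    rw [RingHom.id_apply, ← homEquiv_comp_rightMul]
    rfl
  left_inv l := by
    simp only [Equiv.symm_apply_apply]
    rfl
  right_inv y := (d.homEquiv X).apply_symm_apply y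

lemma homLinearEquiv_symm_map {X Y : ResSub R C} (f : X ⟶ Y) (y : (d.F.obj (op Y)).obj) :
    (d.homLinearEquiv X).symm ((d.F.map f.op).hom y) =
      (d.homLinearEquiv Y).symm y ∘ₗ f.hom.hom := by
  rw [LinearEquiv.symm_apply_eq]
  change _ = d.homEquiv X (f ≫ (d.homEquiv Y).symm y)
  rw [homEquiv_comp, Equiv.apply_symm_apply]

noncomputable def isoHomFunctor :
    d.F ⋙ ObjectProperty.ι (fun N : ModuleCat S => N ∈ D) ≅
      (ObjectProperty.ι (fun M : ModuleCat R => M ∈ C)).op ⋙ d.bimodule.homFunctor :=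
  NatIso.ofComponents (fun X => (d.homLinearEquiv X.unop).symm.toModuleIso) fun f => by
    ext y : 2
    exact d.homLinearEquiv_symm_map f.unop y

lemma rightAction_bijective : Bijective d.bimodule.rightAction := by
  have h : d.bimodule.rightAction =
      (fun φ => φ.hom.hom) ∘ d.G.map ∘ Quiver.Hom.op ∘ rightMul d.resD := rfl
  rw [h]
  exact (InducedCategory.homEquiv.trans ModuleCat.homEquiv).bijective.comp
    ((d.equivalence.fullyFaithfulInverse.map_bijective _ _).comp
      (Quiver.Hom.opEquiv.bijective.comp (rightMul_bijective d.resD)))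

/-- `G(S) ≅ Hom_R(R, G(S)) ≅ F(R)`: the bimodules built from `d` and from `d.flip` agree. -/
noncomputable def flipLinearEquiv : d.bimodule.T ≃ₗ[S] d.flip.bimodule.T :=
  (LinearMap.ringLmapEquivSelf R S d.bimodule.T).symm.trans (d.homLinearEquiv (regularObj d.resC))

lemma flipLinearEquiv_smul (a : R) (t : d.bimodule.T) :
    d.flipLinearEquiv (a • t) = a • d.flipLinearEquiv t := by
  change d.homEquiv _ _ = (d.F.map (rightMul d.resC a).op).hom (d.homEquiv _ _)
  rw [← homEquiv_comp]
  congr 1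
  ext
  change (1 : R) • a • t = ((1 : R) * a) • t
  rw [one_smul, one_mul]

lemma leftAction_bijective : Bijective d.bimodule.leftAction := by
  have h : d.bimodule.leftAction =
      d.flipLinearEquiv.symm.conjRingEquiv ∘ d.flip.bimodule.rightAction := by
    funext a
    ext t
    change a • t = d.flipLinearEquiv.symm (a • d.flipLinearEquiv t)
    rw [← flipLinearEquiv_smul, LinearEquiv.symm_apply_apply]
  rw [h]
  exact d.flipLinearEquiv.symm.conjRingEquiv.bijective.comp d.flip.rightAction_bijective

lemma bimodule_isFaithfullyBalanced : d.bimodule.IsFaithfullyBalanced :=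
  ⟨d.leftAction_bijective, d.rightAction_bijective⟩

end ResolvingDuality

theorem stmt7_general (A B : Type) [Ring A] [Ring B]
    (C : Set (ModuleCat A)) (D : Set (ModuleCat Bᵐᵒᵖ))
    (dl : ResolvingDuality C D) :
    ∃ W : BimoduleOver A Bᵐᵒᵖ,
      W.IsWakamatsuTiltingBimodule ∧
      Nonempty (W.right ≅ (dl.F.obj (Opposite.op (regularObj dl.resC))).obj) ∧
      Nonempty (W.left ≅ (dl.G.obj (Opposite.op (regularObj dl.resD))).obj) ∧
      Nonempty (dl.F ⋙ ObjectProperty.ι (fun N : ModuleCat Bᵐᵒᵖ => N ∈ D) ≅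
        (ObjectProperty.ι (fun M : ModuleCat A => M ∈ C)).op ⋙ W.homFunctor) ∧
      Nonempty (dl.G ⋙ ObjectProperty.ι (fun M : ModuleCat A => M ∈ C) ≅
        (ObjectProperty.ι (fun N : ModuleCat Bᵐᵒᵖ => N ∈ D)).op ⋙
          W.flip.homFunctor) ∧
      (∀ M ∈ C, M ∈ WClass A W.left) ∧ (∀ N ∈ D, N ∈ WClass Bᵐᵒᵖ W.right) := by
  let eT := dl.flipLinearEquiv.toModuleIso
  have hC : IsRelInjCogenerator C dl.bimodule.left := dl.isRelInjCogenerator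
  have hD : IsRelInjCogenerator D dl.bimodule.right := dl.flip.isRelInjCogenerator.of_iso eT.symm
  have hTD : dl.bimodule.right ∈ D := dl.resD.iso_closed _ _ ⟨eT.symm⟩ dl.flip.dualizingObj.2
  have hG : dl.flip.bimodule.homFunctor ≅ dl.bimodule.flip.homFunctor :=
    (BimoduleOver.homFunctorIso (W := dl.bimodule.flip) dl.flipLinearEquiv
      dl.flipLinearEquiv_smul).symm
  exact ⟨dl.bimodule, ⟨dl.bimodule_isFaithfullyBalanced,
    hC.isWakamatsuTilting dl.resC dl.dualizingObj.2, hD.isWakamatsuTilting dl.resD hTD⟩,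
    ⟨eT⟩, ⟨Iso.refl _⟩, ⟨dl.isoHomFunctor⟩,
    ⟨dl.flip.isoHomFunctor ≪≫ Functor.isoWhiskerLeft _ hG⟩,
    fun M hM => hC.mem_WClass dl.resC hM, fun N hN => hD.mem_WClass dl.resD hN⟩

/-- Inverse resolving dualities `F : C → D`, `G : D → C` between
resolving subcategories `C ⊆ A`-mod and `D ⊆ B^{op}`-mod are afforded by a Wakamatsu
tilting `A`-`B`-bimodule `T` with `T ≅ G(B)` as a left `A`-module and `T ≅ F(A)` as a
right `B`-module; moreover `F ≅ Hom_A(-,T)|_C`, `G ≅ Hom_{B^{op}}(-,T)|_D`, and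
`C ⊆ W(_AT)`, `D ⊆ W(T_B)`. -/
theorem stmt7 (A B : Type) [Ring A] [Ring B] [IsArtinianRing A] [IsArtinianRing B]
    (C : Set (ModuleCat A)) (D : Set (ModuleCat Bᵐᵒᵖ))
    (dl : ResolvingDuality C D) :
    ∃ W : BimoduleOver A Bᵐᵒᵖ,
      W.IsWakamatsuTiltingBimodule ∧
      Nonempty (W.right ≅ (dl.F.obj (Opposite.op (regularObj dl.resC))).obj) ∧
      Nonempty (W.left ≅ (dl.G.obj (Opposite.op (regularObj dl.resD))).obj) ∧
      Nonempty (dl.F ⋙ ObjectProperty.ι (fun N : ModuleCat Bᵐᵒᵖ => N ∈ D) ≅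
        (ObjectProperty.ι (fun M : ModuleCat A => M ∈ C)).op ⋙ W.homFunctor) ∧
      Nonempty (dl.G ⋙ ObjectProperty.ι (fun M : ModuleCat A => M ∈ C) ≅
        (ObjectProperty.ι (fun N : ModuleCat Bᵐᵒᵖ => N ∈ D)).op ⋙
          W.flip.homFunctor) ∧
      (∀ M ∈ C, M ∈ WClass A W.left) ∧ (∀ N ∈ D, N ∈ WClass Bᵐᵒᵖ W.right) :=
  stmt7_general A B C D dl
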